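/- Let c, d, q, t be positive integers and let ζ = ζ(c,d,q,t) = 2dμ where μ = μ(c,q,t) is a constant for which the slash lemma holds. Let G be a graph, let W be a d-loose polypath in G, let x, y ∈ V(W) be distinct and non-adjacent, and let P be a collection of ζ pairwise internally disjoint induced paths in G from x to y with V(P) ⊆ V(W). Then there exist a subfamily P_0 ⊆ P with |P_0| = μ and an induced path W_0 in G − {x, y} such that W_0 is an x-slash for P_0, i.e., for every path P in P_0 the unique neighbor of x on P lies on W_0. -/

import Mathlib

/-!
For a path `P` from `x` to `y` let `s P` be its second vertex, the unique neighbour of `x` on `P`.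
The `2dμ` vertices `s P` are distinct and adjacent to `x`. On the induced path of `W` through `x`
at most two of them occur; the others lie on the fewer than `d` further paths of `W` that meet
`N(x)`, so for `μ ≥ 2` one such path `R` carries at least `2μ - 1` of them. Since `R - y` has at
most two components, one component carries `μ` of them, and that component is the slash. For
`μ = 1` the one-vertex path `s P` is a slash.
-/

open scoped Classical

/-- `l` is the vertex sequence of an induced path in `G`. -/
def IsPathList {V : Type} (G : SimpleGraph V) (l : List V) : Prop :=
  l ≠ [] ∧ l.Nodup ∧ ∀ i j : Fin l.length,
    (G.Adj (l.get i) (l.get j) ↔ (i.1 + 1 = j.1 ∨ j.1 + 1 = i.1))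

/-- `p` is an induced path in `G` from `x` to `y`. -/
def IsXYPath {V : Type} (G : SimpleGraph V) (x y : V) (p : List V) : Prop :=
  IsPathList G p ∧ p.head? = some x ∧ p.getLast? = some y

/-- `P` is a `w`-polypath in `G`. -/
def IsPolypath {V : Type} (G : SimpleGraph V) (w : ℕ) (P : Finset (List V)) : Prop :=
  P.card = w ∧ (∀ p ∈ P, IsPathList G p) ∧
  ∀ p ∈ P, ∀ q ∈ P, p ≠ q → ∀ v ∈ p, v ∉ q

/-- The polypath `P` is `d`-loose. -/
def DLoose {V : Type} (G : SimpleGraph V) (d : ℕ) (P : Finset (List V)) : Prop :=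
  ∀ p ∈ P, ∀ v ∈ p,
    ((P.erase p).filter (fun q => ∃ u ∈ q, G.Adj v u)).card < d

/-- `w` is an `x`-slash for the collection `P` of paths from `x` to `y`. -/
def XSlash {V : Type} (G : SimpleGraph V) (x y : V)
    (P : Finset (List V)) (w : List V) : Prop :=
  IsPathList G w ∧ x ∉ w ∧ y ∉ w ∧
  ∀ p ∈ P, ∀ v ∈ p, G.Adj x v → v ∈ w

theorem Finset.exists_lt_card_filter_of_mul_lt_card {α β : Type*} {s : Finset α} {t : Finset β}
    {R : α → β → Prop} [∀ a b, Decidable (R a b)] (hR : ∀ a ∈ s, ∃ b ∈ t, R a b) {n : ℕ}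
    (hn : t.card * n < s.card) :
    ∃ b ∈ t, n < (s.filter (R · b)).card := by
  by_contra! h
  have hcover : s ⊆ t.biUnion (fun b => s.filter (R · b)) := fun a ha => by
    obtain ⟨b, hb, hab⟩ := hR a ha
    exact Finset.mem_biUnion.2 ⟨b, hb, Finset.mem_filter.2 ⟨ha, hab⟩⟩
  have := calc s.card ≤ (t.biUnion (fun b => s.filter (R · b))).card := Finset.card_le_card hcover
    _ ≤ ∑ b ∈ t, (s.filter (R · b)).card := Finset.card_biUnion_le
    _ ≤ t.card • n := Finset.sum_le_card_nsmul _ _ _ h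
  rw [smul_eq_mul] at this
  omega

theorem List.Nodup.exists_infix_notMem_of_two_mul_le {α V : Type*} {r : List V} (hr : r.Nodup)
    {y : V} {T : Finset α} {g : α → V} (hg : ∀ a ∈ T, g a ∈ r ∧ g a ≠ y) {μ : ℕ}
    (hT : 2 * μ ≤ T.card + 1) :
    ∃ w, w <:+: r ∧ y ∉ w ∧ ∃ T₀ ⊆ T, T₀.card = μ ∧ ∀ a ∈ T₀, g a ∈ w := by
  suffices ∃ w, w <:+: r ∧ y ∉ w ∧ μ ≤ (T.filter (g · ∈ w)).card by
    obtain ⟨w, hwr, hyw, hμ⟩ := this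
    obtain ⟨T₀, hT₀, rfl⟩ := Finset.exists_subset_card_eq hμ
    exact ⟨w, hwr, hyw, T₀, hT₀.trans (Finset.filter_subset _ _), rfl,
      fun a ha => (Finset.mem_filter.1 (hT₀ ha)).2⟩
  by_cases hyr : y ∈ r
  · obtain ⟨L, R, rfl⟩ := List.append_of_mem hyr
    have hsplit : T.card ≤ (T.filter (g · ∈ L)).card + (T.filter (g · ∈ R)).card := by
      refine (Finset.card_le_card fun a ha => ?_).trans (Finset.card_union_le _ _)
      obtain ⟨hgr, hgy⟩ := hg a ha
      simp only [List.mem_append, List.mem_cons] at hgr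
      simp only [Finset.mem_union, Finset.mem_filter]
      tauto
    have hyLR : y ∉ L ++ R := (List.nodup_cons.1 (List.nodup_middle.1 hr)).1
    rw [List.mem_append, not_or] at hyLR
    by_cases hL : μ ≤ (T.filter (g · ∈ L)).card
    · exact ⟨L, (List.prefix_append _ _).isInfix, hyLR.1, hL⟩
    · exact ⟨R, (List.suffix_cons _ _).isInfix.trans (List.suffix_append _ _).isInfix, hyLR.2,
        by omega⟩
  · refine ⟨r, List.infix_refl r, hyr, ?_⟩
    rw [Finset.filter_true_of_mem fun a ha => (hg a ha).1]
    omega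

section Paths

variable {V : Type} {G : SimpleGraph V}

theorem isPathList_singleton (v : V) : IsPathList G [v] :=
  ⟨List.cons_ne_nil _ _, List.nodup_singleton v, fun i j => by fin_cases i; fin_cases j; simp⟩

namespace IsPathList

variable {r : List V}

theorem adj_getElem_iff (hr : IsPathList G r) {i j : ℕ} (hi : i < r.length) (hj : j < r.length) :
    G.Adj r[i] r[j] ↔ i + 1 = j ∨ j + 1 = i :=
  hr.2.2 ⟨i, hi⟩ ⟨j, hj⟩

theorem of_isInfix (hr : IsPathList G r) {w : List V} (hw : w <:+: r) (hne : w ≠ []) :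
    IsPathList G w := by
  obtain ⟨s, t, rfl⟩ := hw
  refine ⟨hne, hr.2.1.sublist (List.infix_append s w t).sublist, fun i j => ?_⟩
  have h := hr.adj_getElem_iff (i := s.length + i) (j := s.length + j)
    (by simp; omega) (by simp; omega)
  simp only [List.append_assoc, List.getElem_append_right (Nat.le_add_right _ _),
    Nat.add_sub_cancel_left, List.getElem_append_left i.2, List.getElem_append_left j.2] at h
  simpa [Nat.add_assoc, Nat.add_right_comm] using h

theorem eq_getD_of_adj (hr : IsPathList G r) {i : ℕ} (hi : i < r.length) {u : V} (hu : u ∈ r)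
    (hadj : G.Adj r[i] u) (d : V) : u = r.getD (i + 1) d ∨ u = r.getD (i - 1) d := by
  obtain ⟨j, hj, rfl⟩ := List.mem_iff_getElem.1 hu
  rcases (hr.adj_getElem_iff hi hj).1 hadj with rfl | rfl
  · exact Or.inl (List.getD_eq_getElem _ _ hj).symm
  · exact Or.inr (by rw [Nat.add_sub_cancel, List.getD_eq_getElem _ _ hj])

theorem card_le_two_of_adj (hr : IsPathList G r) {x : V} (hx : x ∈ r) {U : Finset V}
    (hU : ∀ u ∈ U, u ∈ r ∧ G.Adj x u) : U.card ≤ 2 := by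
  have hi := List.idxOf_lt_length_iff.2 hx
  refine (Finset.card_le_card (t := {r.getD (r.idxOf x + 1) x, r.getD (r.idxOf x - 1) x})
    fun u hu => ?_).trans Finset.card_le_two
  have hadj := (hU u hu).2
  rw [← List.getElem_idxOf hi] at hadj
  simpa using hr.eq_getD_of_adj hi (hU u hu).1 hadj x

end IsPathList

-- `p.getD 1 x` is the second vertex of `p`, i.e. the unique neighbour of `x` on `p`.
namespace IsXYPath

variable {x y : V} {p : List V}

theorem one_lt_length (hp : IsXYPath G x y p) (hxy : x ≠ y) : 1 < p.length := by
  obtain ⟨⟨hne, -, -⟩, hhead, hlast⟩ := hp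
  rcases p with _ | ⟨a, _ | ⟨b, t⟩⟩ <;> simp_all

theorem getElem_zero (hp : IsXYPath G x y p) (h : 0 < p.length) : p[0] = x := by
  rcases p with _ | ⟨a, t⟩
  · simp at h
  · simpa using hp.2.1

theorem getD_one_mem (hp : IsXYPath G x y p) (hxy : x ≠ y) : p.getD 1 x ∈ p := by
  rw [List.getD_eq_getElem _ _ (hp.one_lt_length hxy)]
  exact List.getElem_mem _

theorem adj_getD_one (hp : IsXYPath G x y p) (hxy : x ≠ y) : G.Adj x (p.getD 1 x) := by
  have h1 := hp.one_lt_length hxy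
  have h := (hp.1.adj_getElem_iff (i := 0) (j := 1) (by omega) h1).2 (Or.inl rfl)
  rwa [hp.getElem_zero (by omega), ← List.getD_eq_getElem _ x] at h

theorem getD_one_ne_right (hp : IsXYPath G x y p) (hxy : x ≠ y) (hnadj : ¬ G.Adj x y) :
    p.getD 1 x ≠ y :=
  fun h => hnadj (h ▸ hp.adj_getD_one hxy)

theorem eq_getD_one_of_adj (hp : IsXYPath G x y p) {u : V} (hu : u ∈ p) (hadj : G.Adj x u) :
    u = p.getD 1 x := by
  have h0 : 0 < p.length := List.length_pos_of_mem hu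
  rw [← hp.getElem_zero h0] at hadj
  refine (hp.1.eq_getD_of_adj h0 hu hadj x).resolve_right ?_
  rintro rfl
  rw [Nat.zero_sub, List.getD_eq_getElem _ _ h0] at hadj
  exact G.irrefl hadj

end IsXYPath

end Paths

section Slash

variable {V : Type} {G : SimpleGraph V} {x y : V}

theorem injOn_getD_one {P : Finset (List V)} (hP : ∀ p ∈ P, IsXYPath G x y p) (hxy : x ≠ y)
    (hnadj : ¬ G.Adj x y)
    (hdisj : ∀ p ∈ P, ∀ p' ∈ P, p ≠ p' → ∀ v ∈ p, v ∈ p' → v = x ∨ v = y) :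
    Set.InjOn (fun p : List V => p.getD 1 x) P := by
  intro p hp p' hp' (he : p.getD 1 x = p'.getD 1 x)
  by_contra hne
  rcases hdisj p hp p' hp' hne _ ((hP p hp).getD_one_mem hxy)
    (he ▸ (hP p' hp').getD_one_mem hxy) with h | h
  · exact (hP p hp).adj_getD_one hxy |>.ne' h
  · exact (hP p hp).getD_one_ne_right hxy hnadj h

theorem xSlash_of_getD_one_mem {P : Finset (List V)} {w : List V} (hw : IsPathList G w)
    (hxw : x ∉ w) (hyw : y ∉ w) (hP : ∀ p ∈ P, IsXYPath G x y p ∧ p.getD 1 x ∈ w) :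
    XSlash G x y P w :=
  ⟨hw, hxw, hyw, fun p hp _ hv hadj => (hP p hp).1.eq_getD_one_of_adj hv hadj ▸ (hP p hp).2⟩

theorem DLoose.exists_two_mul_le_card_filter {W : Finset (List V)} {d : ℕ} (hloose : DLoose G d W)
    {wx : List V} (hwxW : wx ∈ W) (hwx : IsPathList G wx) (hxwx : x ∈ wx)
    {α : Type*} {P : Finset α} {s : α → V} (hinj : Set.InjOn s P)
    (hadj : ∀ a ∈ P, G.Adj x (s a)) (hW : ∀ a ∈ P, ∃ r ∈ W, s a ∈ r)
    {μ : ℕ} (hμ : 2 ≤ μ) (hcard : 2 * d * μ ≤ P.card) :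
    ∃ r ∈ W, r ≠ wx ∧ 2 * μ ≤ (P.filter (s · ∈ r)).card + 1 := by
  have hon : (P.filter (s · ∈ wx)).card ≤ 2 := by
    rw [← Finset.card_image_of_injOn (hinj.mono (Finset.filter_subset _ P))]
    refine hwx.card_le_two_of_adj hxwx fun u hu => ?_
    obtain ⟨a, ha, rfl⟩ := Finset.mem_image.1 hu
    obtain ⟨haP, hawx⟩ := Finset.mem_filter.1 ha
    exact ⟨hawx, hadj a haP⟩
  have hoff := Finset.card_filter_add_card_filter_not (s := P) (s · ∈ wx)
  set N := P.filter (s · ∉ wx)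
  set S := (W.erase wx).filter (fun r => ∃ u ∈ r, G.Adj x u)
  have hS : S.card < d := hloose wx hwxW x hxwx
  have hcover : ∀ a ∈ N, ∃ r ∈ S, s a ∈ r := fun a ha => by
    obtain ⟨haP, hawx⟩ := Finset.mem_filter.1 ha
    obtain ⟨r, hrW, har⟩ := hW a haP
    exact ⟨r, Finset.mem_filter.2 ⟨Finset.mem_erase.2 ⟨fun h => hawx (h ▸ har), hrW⟩,
      s a, har, hadj a haP⟩, har⟩
  obtain ⟨k, rfl⟩ := Nat.exists_eq_add_of_le hμ
  have hmul : S.card * (2 * k + 2) < N.card := by nlinarith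
  obtain ⟨r, hrS, hr⟩ := Finset.exists_lt_card_filter_of_mul_lt_card hcover hmul
  obtain ⟨hrwx, hrW⟩ := Finset.mem_erase.1 (Finset.mem_filter.1 hrS).1
  have hsub : (N.filter (s · ∈ r)).card ≤ (P.filter (s · ∈ r)).card :=
    Finset.card_le_card (Finset.filter_subset_filter _ (Finset.filter_subset _ _))
  exact ⟨r, hrW, hrwx, by omega⟩

end Slash

theorem stmt18_general (d μ : ℕ) (hμ : 0 < μ)
    (V : Type) (G : SimpleGraph V) (W : Finset (List V)) (w : ℕ)
    (hpoly : IsPolypath G w W) (hloose : DLoose G d W)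
    (x y : V) (hx : ∃ p ∈ W, x ∈ p)
    (hxy : x ≠ y) (hnadj : ¬ G.Adj x y)
    (P : Finset (List V)) (hcard : P.card = 2 * d * μ)
    (hP : ∀ p ∈ P, IsXYPath G x y p ∧ ∀ v ∈ p, ∃ r ∈ W, v ∈ r)
    (hdisj : ∀ p ∈ P, ∀ p' ∈ P, p ≠ p' → ∀ v ∈ p, v ∈ p' → v = x ∨ v = y) :
    ∃ P0 ⊆ P, P0.card = μ ∧ ∃ W0 : List V, XSlash G x y P0 W0 := by
  obtain ⟨-, hWpath, hWdisj⟩ := hpoly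
  obtain ⟨wx, hwxW, hxwx⟩ := hx
  have hxyP p (hp : p ∈ P) : IsXYPath G x y p := (hP p hp).1
  have hadj p (hp : p ∈ P) : G.Adj x (p.getD 1 x) := (hxyP p hp).adj_getD_one hxy
  rcases Nat.lt_or_ge μ 2 with hμ1 | hμ2
  · obtain rfl : μ = 1 := by omega
    have hd : 0 < d := (Nat.zero_le _).trans_lt (hloose wx hwxW x hxwx)
    obtain ⟨p, hp⟩ : P.Nonempty := by rw [← Finset.card_pos, hcard]; omega
    refine ⟨{p}, Finset.singleton_subset_iff.2 hp, rfl, [p.getD 1 x],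
      xSlash_of_getD_one_mem (isPathList_singleton _) ?_ ?_ (by simpa using hxyP p hp)⟩
    · simpa using (hadj p hp).ne
    · simpa [eq_comm] using (hxyP p hp).getD_one_ne_right hxy hnadj
  · obtain ⟨r, hrW, hrwx, hr⟩ := hloose.exists_two_mul_le_card_filter hwxW (hWpath wx hwxW) hxwx
      (injOn_getD_one hxyP hxy hnadj hdisj) hadj
      (fun p hp => (hP p hp).2 _ ((hxyP p hp).getD_one_mem hxy)) hμ2 hcard.ge
    obtain ⟨W0, hW0r, hyW0, P0, hP0, rfl, hP0W0⟩ :=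
      (hWpath r hrW).2.1.exists_infix_notMem_of_two_mul_le (fun p hp => ⟨(Finset.mem_filter.1 hp).2,
        (hxyP p (Finset.mem_filter.1 hp).1).getD_one_ne_right hxy hnadj⟩) hr
    obtain ⟨p₀, hp₀⟩ := Finset.card_pos.1 hμ
    refine ⟨P0, hP0.trans (Finset.filter_subset _ _), rfl, W0,
      xSlash_of_getD_one_mem ((hWpath r hrW).of_isInfix hW0r (List.ne_nil_of_mem (hP0W0 p₀ hp₀)))
        (fun h => hWdisj wx hwxW r hrW hrwx.symm x hxwx (hW0r.subset h)) hyW0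
        fun p hp => ⟨hxyP p (Finset.filter_subset _ _ (hP0 hp)), hP0W0 p hp⟩⟩

theorem stmt18 (c d q t μ : ℕ) (hc : 0 < c) (hd : 0 < d) (hq : 0 < q)
    (ht : 0 < t) (hμ : 0 < μ)
    (V : Type) (G : SimpleGraph V) (W : Finset (List V)) (w : ℕ)
    (hpoly : IsPolypath G w W) (hloose : DLoose G d W)
    (x y : V) (hx : ∃ p ∈ W, x ∈ p) (hy : ∃ p ∈ W, y ∈ p)
    (hxy : x ≠ y) (hnadj : ¬ G.Adj x y)
    (P : Finset (List V)) (hcard : P.card = 2 * d * μ)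
    (hP : ∀ p ∈ P, IsXYPath G x y p ∧ ∀ v ∈ p, ∃ r ∈ W, v ∈ r)
    (hdisj : ∀ p ∈ P, ∀ p' ∈ P, p ≠ p' → ∀ v ∈ p, v ∈ p' → v = x ∨ v = y) :
    ∃ P0 ⊆ P, P0.card = μ ∧ ∃ W0 : List V, XSlash G x y P0 W0 :=
  stmt18_general d μ hμ V G W w hpoly hloose x y hx hxy hnadj P hcard hP hdisj
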